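/- arXiv:2312.12777 — 3 statements merged into one kernel-verified Lean document; each statement's English description precedes it below -/
import Mathlib

section
/- Let h > 0, let B be a finite subset of ℤ^8_h, and let f : ℤ^8_h → 𝕆 be any function. Then for each l ∈ {0,…,7} the discrete divergence identities hold: Σ_{x∈∂B} f(x)·n_l^{+}(x)·s(x) = h^8 · Σ_{x∈B} ∂_l^{−,h} f(x) and Σ_{x∈∂B} f(x)·n_l^{−}(x)·s(x) = h^8 · Σ_{x∈B} ∂_l^{+,h} f(x). -/
open MeasureTheory Real Filter Topology
open scoped BigOperators

noncomputable section

/-- The octonions, as the Euclidean space `ℝ^8`. -/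
abbrev Oct : Type := EuclideanSpace ℝ (Fin 8)

/-- The unit lattice `ℤ^8`. -/
abbrev Lat8 : Type := Fin 8 → ℤ

/-- The standard basis `e_0, …, e_7` of the octonions. -/
def octBasis (l : Fin 8) : Oct := EuclideanSpace.single l 1

/-- The distinguished triples where the antisymmetric tensor `ε` equals 1. -/
def tripleList : List (Fin 8 × Fin 8 × Fin 8) :=
  [(1,2,3),(1,4,5),(1,7,6),(2,4,6),(2,5,7),(3,4,7),(3,6,5)]

/-- The totally antisymmetric tensor `ε_{ijk}`. -/
def eps (i j k : Fin 8) : ℝ :=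
  if (i,j,k) ∈ tripleList ∨ (j,k,i) ∈ tripleList ∨ (k,i,j) ∈ tripleList then 1
  else if (i,k,j) ∈ tripleList ∨ (k,j,i) ∈ tripleList ∨ (j,i,k) ∈ tripleList then -1
  else 0

/-- Structure constants of octonion multiplication: coefficient of `e_k` in `e_i e_j`. -/
def structC (i j k : Fin 8) : ℝ :=
  if i = 0 then (if k = j then 1 else 0)
  else if j = 0 then (if k = i then 1 else 0)
  else if k = 0 then (if i = j then -1 else 0)
  else eps i j k

/-- Octonion multiplication. -/
def octMul (x y : Oct) : Oct :=
  WithLp.toLp 2 (fun k => ∑ i : Fin 8, ∑ j : Fin 8, x i * y j * structC i j k)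

/-- Octonion conjugation `x̄`. -/
def octConj (x : Oct) : Oct := WithLp.toLp 2 (fun k => if k = 0 then x 0 else -x k)

/-- The standard basis vector of the integer lattice. -/
def unitL (l : Fin 8) : Lat8 := fun k => if k = l then 1 else 0

/-- The embedding of `ℤ^8_h = (hℤ)^8` into `ℝ^8 = 𝕆`. -/
def toOct (h : ℝ) (x : Lat8) : Oct := WithLp.toLp 2 (fun k => h * (x k : ℝ))

section diffs
variable {V : Type*} [AddCommGroup V] [Module ℝ V]

/-- Forward difference `∂_l^{+,h}` (on functions of the integer lattice, mesh `h`). -/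
def fdiff (h : ℝ) (f : Lat8 → V) (l : Fin 8) (x : Lat8) : V := h⁻¹ • (f (x + unitL l) - f x)

/-- Backward difference `∂_l^{-,h}`. -/
def bdiff (h : ℝ) (f : Lat8 → V) (l : Fin 8) (x : Lat8) : V := h⁻¹ • (f x - f (x - unitL l))

/-- Central difference `∂_l^h`. -/
def cdiff (h : ℝ) (f : Lat8 → V) (l : Fin 8) (x : Lat8) : V :=
  (2:ℝ)⁻¹ • (fdiff h f l x + bdiff h f l x)

end diffs

/-- The discrete Dirac (Cauchy–Fueter) operator `D^h`. -/
def DiracD (h : ℝ) (f : Lat8 → Oct) (x : Lat8) : Oct :=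
  ∑ l : Fin 8, octMul (octBasis l) (cdiff h f l x)

/-- Indicator function `χ_B`. -/
def chi (B : Set Lat8) : Lat8 → ℝ := B.indicator fun _ => 1

/-- The discrete neighbourhood `N(x) = {x, x ± he_0, …, x ± he_7}` (integer coordinates). -/
def nbhdSet (x : Lat8) : Set Lat8 := {x} ∪ ⋃ l : Fin 8, {x + unitL l, x - unitL l}

/-- The discrete boundary of a set of lattice points. -/
def dBdryS (S : Set Lat8) : Set Lat8 :=
  {x | (nbhdSet x ∩ S).Nonempty ∧ (nbhdSet x ∩ Sᶜ).Nonempty}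

/-- The discrete interior `S° = S ∖ ∂S`. -/
def dIntS (S : Set Lat8) : Set Lat8 := S \ dBdryS S

/-- The discrete neighbourhood as a finset. -/
def nbhdF (x : Lat8) : Finset Lat8 :=
  insert x ((Finset.univ : Finset (Fin 8)).biUnion fun l => {x + unitL l, x - unitL l})

/-- The discrete boundary of a finite set of lattice points, as a finset. -/
def bdryF (B : Finset Lat8) : Finset Lat8 :=
  @Finset.filter _ (fun x => x ∈ dBdryS (↑B : Set Lat8)) (Classical.decPred _)
    (B.biUnion nbhdF)

/-- The quantity `Σ_l [(∂_l^{+,h}χ_B)² + (∂_l^{-,h}χ_B)²]`. -/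
def wfun (h : ℝ) (B : Finset Lat8) (x : Lat8) : ℝ :=
  ∑ l : Fin 8, ((fdiff h (chi ↑B) l x)^2 + (bdiff h (chi ↑B) l x)^2)

/-- The discrete boundary measure density `s(x)`, extended by `0` off `∂B`. -/
def sfun (h : ℝ) (B : Finset Lat8) : Lat8 → ℝ :=
  (dBdryS (↑B : Set Lat8)).indicator fun x => (h^8/2) * Real.sqrt (wfun h B x)

/-- The outward normal component `n_l^{+}(x)`, extended by `0` off `∂B`. -/
def nplus (h : ℝ) (B : Finset Lat8) (l : Fin 8) : Lat8 → ℝ :=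
  (dBdryS (↑B : Set Lat8)).indicator fun x =>
    (-2 * fdiff h (chi ↑B) l x) / Real.sqrt (wfun h B x)

/-- The outward normal component `n_l^{-}(x)`, extended by `0` off `∂B`. -/
def nminus (h : ℝ) (B : Finset Lat8) (l : Fin 8) : Lat8 → ℝ :=
  (dBdryS (↑B : Set Lat8)).indicator fun x =>
    (-2 * bdiff h (chi ↑B) l x) / Real.sqrt (wfun h B x)

/-- The cube `[-π,π]^8`. -/
def cube : Set (Fin 8 → ℝ) := Set.univ.pi fun _ => Set.Icc (-Real.pi) Real.pi

/-- The `l`-th (complex) coefficient integral of the discrete fundamental solution `E¹`. -/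
def E1coeff (l : Fin 8) (x : Lat8) : ℂ :=
  -((((2*Real.pi)^8 : ℝ) : ℂ))⁻¹ *
    ∫ u in cube,
      (Complex.I * ((Real.sin (u l) : ℝ) : ℂ) / (((∑ m : Fin 8, (Real.sin (u m))^2 : ℝ)) : ℂ)) *
        Complex.exp (Complex.I * (((∑ m : Fin 8, u m * (x m : ℝ)) : ℝ) : ℂ))

/-- The sign of the conjugate basis vector `ē_l` relative to `e_l`. -/
def ebarSign (l : Fin 8) : ℝ := if l = 0 then 1 else -1

/-- The discrete fundamental solution `E¹` on the unit lattice (each coefficient of the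
defining integral is real, so `E¹` is octonion-valued). -/
def E1 (x : Lat8) : Oct := WithLp.toLp 2 (fun l => ebarSign l * (E1coeff l x).re)

/-- The discrete fundamental solution `E^h(x) = h^{-7} E¹(x/h)` (integer coordinates). -/
def Eh (h : ℝ) (x : Lat8) : Oct := (h^7)⁻¹ • E1 x

/-- The discrete Dirac delta `δ_0^h`. -/
def deltah (h : ℝ) (x : Lat8) : ℝ := if x = 0 then (h^8)⁻¹ else 0

/-- The star product `K^h(x,y) ∗ a`. -/
def Kstar (h : ℝ) (B : Finset Lat8) (x y : Lat8) (a : Oct) : Oct :=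
  -((2:ℝ)⁻¹ • ∑ l : Fin 8,
    octMul (nminus h B l x • Eh h (unitL l - x + y) + nplus h B l x • Eh h (-unitL l - x + y))
      (octMul (octBasis l) a))

/-- The discrete Cauchy–Bitsadze operator `C^h_{∂B}`. -/
def CauchyOp (h : ℝ) (B : Finset Lat8) (f : Lat8 → Oct) (y : Lat8) : Oct :=
  ∑ x ∈ bdryF B, sfun h B x • Kstar h B x y (f x)

/-- The discrete Teodorescu operator `T^h_B`. -/
def Teo (h : ℝ) (B : Finset Lat8) (f : Lat8 → Oct) (y : Lat8) : Oct :=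
  (h^8 : ℝ) • ∑ x ∈ B, octMul (Eh h (y - x)) (f x)

/-- The singular integral operator `S^h_{∂B}`. -/
def SOp (h : ℝ) (B : Finset Lat8) (f : Lat8 → Oct) (y : Lat8) : Oct :=
  (2:ℝ) • ∑ x ∈ bdryF B, sfun h B x • Kstar h B x y (f x - f y) + f y

/-- The discrete Plemelj projection `P^h_{∂B}`. -/
def POp (h : ℝ) (B : Finset Lat8) (f : Lat8 → Oct) (y : Lat8) : Oct :=
  (2:ℝ)⁻¹ • (f y + SOp h B f y)

/-- The discrete Plemelj projection `Q^h_{∂B}`. -/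
def QOp (h : ℝ) (B : Finset Lat8) (f : Lat8 → Oct) (y : Lat8) : Oct :=
  (2:ℝ)⁻¹ • (f y - SOp h B f y)

/-- `g` vanishes at infinity on the lattice `ℤ^8_h`. -/
def VanishesAtInfty (h : ℝ) (g : Lat8 → Oct) : Prop :=
  ∀ ε > (0:ℝ), ∃ R > (0:ℝ), ∀ y : Lat8, R < ‖toOct h y‖ → ‖g y‖ < ε

open scoped Classical in
/-- The continuous fundamental solution `E(x) = (3/π⁴) x̄ / ‖x‖⁸`, with `E(0) = 0`. -/
def Econt (z : Oct) : Oct :=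
  if z = 0 then 0 else ((3 / Real.pi^4) * (‖z‖^8)⁻¹) • octConj z

/-- The weight `ω(x) = Π_l (1 + 2 cos(π x_l))` on the unit lattice. -/
def omegaFun (x : Lat8) : ℝ := ∏ l : Fin 8, (1 + 2 * Real.cos (Real.pi * (x l : ℝ)))

/-- The continuous Dirac operator `D`. -/
def DiracC (F : Oct → Oct) (x : Oct) : Oct :=
  ∑ l : Fin 8, octMul (octBasis l) (fderiv ℝ F x (octBasis l))

/-- Convergence of discrete sets `B^h ⊆ ℤ^8_h` to a bounded open set `B ⊆ ℝ^8`. -/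
def ConvergesTo (Bh : ℝ → Set Lat8) (B : Set Oct) : Prop :=
  ∀ ε > (0:ℝ), ∃ δ > (0:ℝ), ∀ h : ℝ, 0 < h → h < δ →
    (∀ a ∈ frontier B, ∃ b ∈ dBdryS (Bh h), dist a (toOct h b) ≤ ε) ∧
    (∀ b ∈ dBdryS (Bh h), ∃ a ∈ frontier B, dist (toOct h b) a ≤ ε) ∧
    (∀ a ∈ closure B, ∃ b ∈ Bh h, dist a (toOct h b) ≤ ε) ∧
    (∀ b ∈ Bh h, ∃ a ∈ closure B, dist (toOct h b) a ≤ ε)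

/-- The rate condition `B = B^h + O(h²)`, i.e. `h^8 · #(B^h ∖ B) = O(h²)` as `h → 0⁺`. -/
def RateO2 (Bh : ℝ → Set Lat8) (B : Set Oct) : Prop :=
  (fun h : ℝ => h^8 * ((Bh h \ {x : Lat8 | toOct h x ∈ B}).ncard : ℝ))
    =O[𝓝[>] (0:ℝ)] (fun h : ℝ => h^2)


/- Auxiliary lemmas -/

lemma chi_of_mem {B : Finset Lat8} {x : Lat8} (hx : x ∈ B) : chi ↑B x = 1 := by
  simp [chi, Set.indicator_of_mem, hx]

lemma chi_of_not_mem {B : Finset Lat8} {x : Lat8} (hx : x ∉ B) : chi ↑B x = 0 := by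
  simp [chi, Set.indicator_of_notMem, hx]

lemma self_mem_nbhdSet (x : Lat8) : x ∈ nbhdSet x := by simp [nbhdSet]

lemma add_mem_nbhdSet (x : Lat8) (l : Fin 8) : x + unitL l ∈ nbhdSet x := by
  right; exact Set.mem_iUnion.mpr ⟨l, Or.inl rfl⟩

lemma sub_mem_nbhdSet (x : Lat8) (l : Fin 8) : x - unitL l ∈ nbhdSet x := by
  right; exact Set.mem_iUnion.mpr ⟨l, Or.inr rfl⟩

lemma self_mem_nbhdF (x : Lat8) : x ∈ nbhdF x := Finset.mem_insert_self _ _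

lemma mem_nbhdF_add (x : Lat8) (l : Fin 8) : x ∈ nbhdF (x + unitL l) := by
  refine Finset.mem_insert_of_mem (Finset.mem_biUnion.mpr ⟨l, Finset.mem_univ l, ?_⟩)
  refine Finset.mem_insert.mpr (Or.inr (Finset.mem_singleton.mpr ?_))
  abel

lemma mem_nbhdF_sub (x : Lat8) (l : Fin 8) : x ∈ nbhdF (x - unitL l) := by
  refine Finset.mem_insert_of_mem (Finset.mem_biUnion.mpr ⟨l, Finset.mem_univ l, ?_⟩)
  refine Finset.mem_insert.mpr (Or.inl ?_)
  abel

lemma mem_bdryF_of_chi_add_ne {B : Finset Lat8} {l : Fin 8} {x : Lat8}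
    (hne : chi ↑B (x + unitL l) ≠ chi ↑B x) : x ∈ bdryF B := by
  classical
  by_cases hx : x ∈ B <;> by_cases hy : x + unitL l ∈ B
  · simp [chi_of_mem, hx, hy] at hne
  · refine Finset.mem_filter.mpr ⟨Finset.mem_biUnion.mpr ⟨x, hx, self_mem_nbhdF x⟩, ?_, ?_⟩
    · exact ⟨x, self_mem_nbhdSet x, by simpa using hx⟩
    · exact ⟨x + unitL l, add_mem_nbhdSet x l, by simpa using hy⟩
  · refine Finset.mem_filter.mpr
      ⟨Finset.mem_biUnion.mpr ⟨x + unitL l, hy, mem_nbhdF_add x l⟩, ?_, ?_⟩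
    · exact ⟨x + unitL l, add_mem_nbhdSet x l, by simpa using hy⟩
    · exact ⟨x, self_mem_nbhdSet x, by simpa using hx⟩
  · simp [chi_of_not_mem, hx, hy] at hne

lemma mem_bdryF_of_chi_sub_ne {B : Finset Lat8} {l : Fin 8} {x : Lat8}
    (hne : chi ↑B x ≠ chi ↑B (x - unitL l)) : x ∈ bdryF B := by
  classical
  by_cases hx : x ∈ B <;> by_cases hy : x - unitL l ∈ B
  · simp [chi_of_mem, hx, hy] at hne
  · refine Finset.mem_filter.mpr ⟨Finset.mem_biUnion.mpr ⟨x, hx, self_mem_nbhdF x⟩, ?_, ?_⟩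
    · exact ⟨x, self_mem_nbhdSet x, by simpa using hx⟩
    · exact ⟨x - unitL l, sub_mem_nbhdSet x l, by simpa using hy⟩
  · refine Finset.mem_filter.mpr
      ⟨Finset.mem_biUnion.mpr ⟨x - unitL l, hy, mem_nbhdF_sub x l⟩, ?_, ?_⟩
    · exact ⟨x - unitL l, sub_mem_nbhdSet x l, by simpa using hy⟩
    · exact ⟨x, self_mem_nbhdSet x, by simpa using hx⟩
  · simp [chi_of_not_mem, hx, hy] at hne

lemma wfun_nonneg (h : ℝ) (B : Finset Lat8) (x : Lat8) : 0 ≤ wfun h B x :=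
  Finset.sum_nonneg fun i _ => by positivity

lemma diffs_eq_zero_of_sqrt_wfun_eq_zero {h : ℝ} {B : Finset Lat8} {x : Lat8}
    (hs : Real.sqrt (wfun h B x) = 0) (l : Fin 8) :
    fdiff h (chi ↑B) l x = 0 ∧ bdiff h (chi ↑B) l x = 0 := by
  have hw : wfun h B x = 0 :=
    le_antisymm (Real.sqrt_eq_zero'.mp hs) (wfun_nonneg h B x)
  have hterm := (Finset.sum_eq_zero_iff_of_nonneg
    (fun i (_ : i ∈ Finset.univ) => by positivity)).mp hw l (Finset.mem_univ l)
  constructor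
  · have h1 : (fdiff h (chi ↑B) l x)^2 = 0 := by
      nlinarith [sq_nonneg (fdiff h (chi ↑B) l x), sq_nonneg (bdiff h (chi ↑B) l x)]
    exact pow_eq_zero_iff two_ne_zero |>.mp h1
  · have h1 : (bdiff h (chi ↑B) l x)^2 = 0 := by
      nlinarith [sq_nonneg (fdiff h (chi ↑B) l x), sq_nonneg (bdiff h (chi ↑B) l x)]
    exact pow_eq_zero_iff two_ne_zero |>.mp h1

lemma nplus_mul_sfun {h : ℝ} {B : Finset Lat8} {l : Fin 8} {x : Lat8}
    (hx : x ∈ dBdryS (↑B : Set Lat8)) :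
    nplus h B l x * sfun h B x = -h^8 * fdiff h (chi ↑B) l x := by
  unfold nplus sfun
  rw [Set.indicator_of_mem hx, Set.indicator_of_mem hx]
  rcases eq_or_ne (Real.sqrt (wfun h B x)) 0 with hs | hs
  · rw [hs, (diffs_eq_zero_of_sqrt_wfun_eq_zero hs l).1]
    simp
  · field_simp

lemma nminus_mul_sfun {h : ℝ} {B : Finset Lat8} {l : Fin 8} {x : Lat8}
    (hx : x ∈ dBdryS (↑B : Set Lat8)) :
    nminus h B l x * sfun h B x = -h^8 * bdiff h (chi ↑B) l x := by
  unfold nminus sfun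
  rw [Set.indicator_of_mem hx, Set.indicator_of_mem hx]
  rcases eq_or_ne (Real.sqrt (wfun h B x)) 0 with hs | hs
  · rw [hs, (diffs_eq_zero_of_sqrt_wfun_eq_zero hs l).2]
    simp
  · field_simp

lemma mem_dBdryS_of_mem_bdryF {B : Finset Lat8} {x : Lat8} (hx : x ∈ bdryF B) :
    x ∈ dBdryS (↑B : Set Lat8) := by
  classical
  exact (Finset.mem_filter.mp hx).2

/-- the discrete divergence identities. -/
theorem discrete_divergence (h : ℝ) (hh : 0 < h) (B : Finset Lat8) (f : Lat8 → Oct)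
    (l : Fin 8) :
    (∑ x ∈ bdryF B, (nplus h B l x * sfun h B x) • f x
        = (h^8 : ℝ) • ∑ x ∈ B, bdiff h f l x) ∧
    (∑ x ∈ bdryF B, (nminus h B l x * sfun h B x) • f x
        = (h^8 : ℝ) • ∑ x ∈ B, fdiff h f l x) := by
  have hpow : h^8 * h⁻¹ = h^7 := by
    field_simp
  constructor
  · -- plus case
    have key : ∀ x ∈ bdryF B, (nplus h B l x * sfun h B x) • f x
        = (h^7 * chi ↑B x) • f x - (h^7 * chi ↑B (x + unitL l)) • f x := by
      intro x hx
      rw [nplus_mul_sfun (mem_dBdryS_of_mem_bdryF hx), ← sub_smul]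
      congr 1
      unfold fdiff
      rw [smul_eq_mul]
      field_simp
      ring
    set U : Finset Lat8 := (bdryF B ∪ B) ∪ B.image (fun y => y - unitL l) with hU
    have hsub : bdryF B ⊆ U := fun x hx =>
      Finset.mem_union_left _ (Finset.mem_union_left _ hx)
    have hBU : B ⊆ U := fun x hx =>
      Finset.mem_union_left _ (Finset.mem_union_right _ hx)
    have hIU : B.image (fun y => y - unitL l) ⊆ U := fun x hx =>
      Finset.mem_union_right _ hx
    have hext : ∑ x ∈ bdryF B,
        ((h^7 * chi ↑B x) • f x - (h^7 * chi ↑B (x + unitL l)) • f x)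
        = ∑ x ∈ U, ((h^7 * chi ↑B x) • f x - (h^7 * chi ↑B (x + unitL l)) • f x) := by
      refine Finset.sum_subset hsub ?_
      intro x _ hx
      have hchi : chi ↑B (x + unitL l) = chi ↑B x := by
        by_contra hne
        exact hx (mem_bdryF_of_chi_add_ne hne)
      rw [hchi, sub_self]
    have h2 : ∑ x ∈ U, (h^7 * chi ↑B x) • f x = (h^7:ℝ) • ∑ x ∈ B, f x := by
      rw [← Finset.sum_subset hBU
        (fun x _ hx => by rw [chi_of_not_mem hx, mul_zero, zero_smul]),
        Finset.smul_sum]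
      exact Finset.sum_congr rfl fun x hx => by rw [chi_of_mem hx, mul_one]
    have h3 : ∑ x ∈ U, (h^7 * chi ↑B (x + unitL l)) • f x
        = (h^7:ℝ) • ∑ y ∈ B, f (y - unitL l) := by
      have hvan : ∀ x ∈ U, x ∉ B.image (fun y => y - unitL l) →
          (h^7 * chi ↑B (x + unitL l)) • f x = 0 := by
        intro x _ hx
        have hnm : x + unitL l ∉ B := fun hc =>
          hx (Finset.mem_image.mpr ⟨x + unitL l, hc, by abel⟩)
        rw [chi_of_not_mem hnm, mul_zero, zero_smul]
      have hinj : ∀ a ∈ B, ∀ b ∈ B,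
          (fun y => y - unitL l) a = (fun y => y - unitL l) b → a = b := by
        intro a _ b _ hab
        have := congrArg (· + unitL l) hab
        simpa using this
      rw [← Finset.sum_subset hIU hvan, Finset.sum_image hinj, Finset.smul_sum]
      refine Finset.sum_congr rfl fun y hy => ?_
      have hyy : y - unitL l + unitL l = y := by abel
      rw [hyy, chi_of_mem hy, mul_one]
    have hRHS : (h^8 : ℝ) • ∑ x ∈ B, bdiff h f l x
        = (h^7:ℝ) • ∑ x ∈ B, f x - (h^7:ℝ) • ∑ x ∈ B, f (x - unitL l) := by
      rw [Finset.smul_sum]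
      have hterm : ∀ x ∈ B, (h^8:ℝ) • bdiff h f l x
          = (h^7:ℝ) • f x - (h^7:ℝ) • f (x - unitL l) := by
        intro x _
        unfold bdiff
        rw [smul_smul, hpow, smul_sub]
      rw [Finset.sum_congr rfl hterm, Finset.sum_sub_distrib,
        ← Finset.smul_sum, ← Finset.smul_sum]
    rw [Finset.sum_congr rfl key, hext, Finset.sum_sub_distrib, h2, h3, hRHS]
  · -- minus case
    have key : ∀ x ∈ bdryF B, (nminus h B l x * sfun h B x) • f x
        = (h^7 * chi ↑B (x - unitL l)) • f x - (h^7 * chi ↑B x) • f x := by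
      intro x hx
      rw [nminus_mul_sfun (mem_dBdryS_of_mem_bdryF hx), ← sub_smul]
      congr 1
      unfold bdiff
      rw [smul_eq_mul]
      field_simp
      ring
    set U : Finset Lat8 := (bdryF B ∪ B) ∪ B.image (fun y => y + unitL l) with hU
    have hsub : bdryF B ⊆ U := fun x hx =>
      Finset.mem_union_left _ (Finset.mem_union_left _ hx)
    have hBU : B ⊆ U := fun x hx =>
      Finset.mem_union_left _ (Finset.mem_union_right _ hx)
    have hIU : B.image (fun y => y + unitL l) ⊆ U := fun x hx =>
      Finset.mem_union_right _ hx
    have hext : ∑ x ∈ bdryF B,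
        ((h^7 * chi ↑B (x - unitL l)) • f x - (h^7 * chi ↑B x) • f x)
        = ∑ x ∈ U, ((h^7 * chi ↑B (x - unitL l)) • f x - (h^7 * chi ↑B x) • f x) := by
      refine Finset.sum_subset hsub ?_
      intro x _ hx
      have hchi : chi ↑B (x - unitL l) = chi ↑B x := by
        by_contra hne
        exact hx (mem_bdryF_of_chi_sub_ne (Ne.symm hne))
      rw [hchi, sub_self]
    have h2 : ∑ x ∈ U, (h^7 * chi ↑B x) • f x = (h^7:ℝ) • ∑ x ∈ B, f x := by
      rw [← Finset.sum_subset hBU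
        (fun x _ hx => by rw [chi_of_not_mem hx, mul_zero, zero_smul]),
        Finset.smul_sum]
      exact Finset.sum_congr rfl fun x hx => by rw [chi_of_mem hx, mul_one]
    have h3 : ∑ x ∈ U, (h^7 * chi ↑B (x - unitL l)) • f x
        = (h^7:ℝ) • ∑ y ∈ B, f (y + unitL l) := by
      have hvan : ∀ x ∈ U, x ∉ B.image (fun y => y + unitL l) →
          (h^7 * chi ↑B (x - unitL l)) • f x = 0 := by
        intro x _ hx
        have hnm : x - unitL l ∉ B := fun hc =>
          hx (Finset.mem_image.mpr ⟨x - unitL l, hc, by abel⟩)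
        rw [chi_of_not_mem hnm, mul_zero, zero_smul]
      have hinj : ∀ a ∈ B, ∀ b ∈ B,
          (fun y => y + unitL l) a = (fun y => y + unitL l) b → a = b := by
        intro a _ b _ hab
        have := congrArg (· - unitL l) hab
        simpa using this
      rw [← Finset.sum_subset hIU hvan, Finset.sum_image hinj, Finset.smul_sum]
      refine Finset.sum_congr rfl fun y hy => ?_
      have hyy : y + unitL l - unitL l = y := by abel
      rw [hyy, chi_of_mem hy, mul_one]
    have hRHS : (h^8 : ℝ) • ∑ x ∈ B, fdiff h f l x
        = (h^7:ℝ) • ∑ x ∈ B, f (x + unitL l) - (h^7:ℝ) • ∑ x ∈ B, f x := by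
      rw [Finset.smul_sum]
      have hterm : ∀ x ∈ B, (h^8:ℝ) • fdiff h f l x
          = (h^7:ℝ) • f (x + unitL l) - (h^7:ℝ) • f x := by
        intro x _
        unfold fdiff
        rw [smul_smul, hpow, smul_sub]
      rw [Finset.sum_congr rfl hterm, Finset.sum_sub_distrib,
        ← Finset.smul_sum, ← Finset.smul_sum]
    rw [Finset.sum_congr rfl key, hext, Finset.sum_sub_distrib, h2, h3, hRHS]

end
end

section
/- For every h > 0 the function E^h(x) := h^{−7} E¹(x/h) is a fundamental solution of the discrete Dirac operator: for every x ∈ ℤ^8_h one has D^h E^h (x) = δ_0^h(x)·e_0, where δ_0^h(0) = h^{−8} and δ_0^h(x) = 0 for x ≠ 0. -/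
open MeasureTheory Real Filter Topology
open scoped BigOperators

noncomputable section

namespace EhFS

def epsZ (i j k : Fin 8) : ℤ :=
  if (i,j,k) ∈ tripleList ∨ (j,k,i) ∈ tripleList ∨ (k,i,j) ∈ tripleList then 1
  else if (i,k,j) ∈ tripleList ∨ (k,j,i) ∈ tripleList ∨ (j,i,k) ∈ tripleList then -1
  else 0

def structZ (i j k : Fin 8) : ℤ :=
  if i = 0 then (if k = j then 1 else 0)
  else if j = 0 then (if k = i then 1 else 0)
  else if k = 0 then (if i = j then -1 else 0)
  else epsZ i j k

def ebarZ (l : Fin 8) : ℤ := if l = 0 then 1 else -1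

lemma structC_eq_Z (i j k : Fin 8) : structC i j k = (structZ i j k : ℝ) := by
  unfold structC structZ eps epsZ; split_ifs <;> norm_num

lemma ebarSign_eq (l : Fin 8) : ebarSign l = (ebarZ l : ℝ) := by
  unfold ebarSign ebarZ; split_ifs <;> norm_num

lemma keyZ : ∀ m l k : Fin 8, structZ m l k * ebarZ l + structZ l m k * ebarZ m
    = if l = m ∧ k = 0 then 2 else 0 := by decide

lemma key_real (m l k : Fin 8) :
    structC m l k * ebarSign l + structC l m k * ebarSign m
      = if l = m ∧ k = 0 then 2 else 0 := by
  rw [structC_eq_Z, structC_eq_Z, ebarSign_eq, ebarSign_eq, ← Int.cast_mul, ← Int.cast_mul,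
    ← Int.cast_add, keyZ m l k]
  split_ifs <;> norm_num

lemma struct_sum_identity (k : Fin 8) (s : Fin 8 → ℝ) :
    ∑ m : Fin 8, ∑ l : Fin 8, (structC m l k * ebarSign l) * (s l * s m)
      = if k = 0 then ∑ m : Fin 8, s m ^ 2 else 0 := by
  have swap : ∑ m : Fin 8, ∑ l : Fin 8, (structC l m k * ebarSign m) * (s l * s m)
      = ∑ m : Fin 8, ∑ l : Fin 8, (structC m l k * ebarSign l) * (s l * s m) := by
    rw [Finset.sum_comm]
    exact Finset.sum_congr rfl fun m _ => Finset.sum_congr rfl fun l _ => by ring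
  have h2 : (∑ m : Fin 8, ∑ l : Fin 8,
      (structC m l k * ebarSign l + structC l m k * ebarSign m) * (s l * s m))
      = 2 * ∑ m : Fin 8, ∑ l : Fin 8, (structC m l k * ebarSign l) * (s l * s m) := by
    simp only [add_mul, Finset.sum_add_distrib]
    rw [swap]; ring
  have h3 : ∑ m : Fin 8, ∑ l : Fin 8,
      (structC m l k * ebarSign l + structC l m k * ebarSign m) * (s l * s m)
      = if k = 0 then 2 * ∑ m : Fin 8, s m ^ 2 else 0 := by
    simp only [key_real]
    have hm : ∀ m : Fin 8, ∑ l : Fin 8, (if l = m ∧ k = 0 then (2:ℝ) else 0) * (s l * s m)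
        = if k = 0 then 2 * s m ^ 2 else 0 := by
      intro m
      rw [Finset.sum_eq_single m]
      · by_cases hk : k = 0 <;> simp [hk] <;> ring
      · intro l _ hlm; simp [hlm]
      · simp
    rw [Finset.sum_congr rfl fun m _ => hm m]
    by_cases hk : k = 0 <;> simp [hk, Finset.mul_sum]
  rw [h3] at h2
  by_cases hk : k = 0 <;> simp [hk] at h2 ⊢ <;> linarith

def Qf (u : Fin 8 → ℝ) : ℝ := ∑ m : Fin 8, Real.sin (u m) ^ 2

def phase (x : Lat8) (u : Fin 8 → ℝ) : ℂ :=
  Complex.exp (Complex.I * (((∑ m : Fin 8, u m * (x m : ℝ)) : ℝ) : ℂ))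

def core (l : Fin 8) (x : Lat8) (u : Fin 8 → ℝ) : ℂ :=
  (Complex.I * ((Real.sin (u l) : ℝ) : ℂ) / ((Qf u : ℝ) : ℂ)) * phase x u

lemma E1coeff_eq (l : Fin 8) (x : Lat8) :
    E1coeff l x = -((((2*Real.pi)^8 : ℝ) : ℂ))⁻¹ * ∫ u in cube, core l x u := rfl

lemma Qf_nonneg (u : Fin 8 → ℝ) : 0 ≤ Qf u :=
  Finset.sum_nonneg fun m _ => sq_nonneg _

lemma norm_phase (x : Lat8) (u : Fin 8 → ℝ) : ‖phase x u‖ = 1 := by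
  rw [phase, Complex.norm_exp]
  simp

lemma measurable_Qf : Measurable Qf := by
  apply Finset.measurable_sum
  intro m _
  exact ((Real.measurable_sin.comp (measurable_pi_apply m)).pow_const 2)

lemma measurable_phase (x : Lat8) : Measurable (phase x) := by
  apply Complex.measurable_exp.comp
  apply Measurable.const_mul
  apply Complex.measurable_ofReal.comp
  exact Finset.measurable_sum _ fun m _ => (measurable_pi_apply m).mul_const _

lemma measurable_core (l : Fin 8) (x : Lat8) : Measurable (core l x) := by
  apply Measurable.mul ?_ (measurable_phase x)
  apply Measurable.div
  · exact (Complex.measurable_ofReal.comp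
      (Real.measurable_sin.comp (measurable_pi_apply l))).const_mul _
  · exact Complex.measurable_ofReal.comp measurable_Qf

def Wf (u : Fin 8 → ℝ) : ℝ := 8⁻¹ * ∏ m : Fin 8, |Real.sin (u m)| ^ (-(4:ℝ)⁻¹)

lemma Wf_nonneg (u : Fin 8 → ℝ) : 0 ≤ Wf u := by
  apply mul_nonneg (by norm_num)
  exact Finset.prod_nonneg fun m _ => Real.rpow_nonneg (abs_nonneg _) _

/-- AM–GM based bound. -/
lemma div_Qf_le_Wf {u : Fin 8 → ℝ} (hu : ∀ m, Real.sin (u m) ≠ 0) (l : Fin 8) :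
    |Real.sin (u l)| / Qf u ≤ Wf u := by
  set P : ℝ := ∏ m : Fin 8, |Real.sin (u m)| ^ ((4:ℝ)⁻¹) with hP
  have hPpos : 0 < P :=
    Finset.prod_pos fun m _ => Real.rpow_pos_of_pos (abs_pos.mpr (hu m)) _
  have hQP : 8 * P ≤ Qf u := by
    have := Real.geom_mean_le_arith_mean_weighted Finset.univ (fun _ => (8:ℝ)⁻¹)
      (fun m => Real.sin (u m) ^ 2) (fun _ _ => by norm_num) (by simp)
      (fun m _ => sq_nonneg _)
    have hprod : ∏ m : Fin 8, (Real.sin (u m) ^ 2) ^ ((8:ℝ)⁻¹) = P := by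
      refine Finset.prod_congr rfl fun m _ => ?_
      rw [← sq_abs, ← Real.rpow_natCast (|Real.sin (u m)|) 2,
        ← Real.rpow_mul (abs_nonneg _)]
      norm_num
    rw [hprod] at this
    have hsum : ∑ m : Fin 8, (8:ℝ)⁻¹ * Real.sin (u m) ^ 2 = 8⁻¹ * Qf u := by
      rw [Qf, Finset.mul_sum]
    rw [hsum] at this
    linarith
  have hQpos : 0 < Qf u := lt_of_lt_of_le (by positivity) hQP
  have hW : Wf u = 8⁻¹ * P⁻¹ := by
    rw [Wf, hP, ← Finset.prod_inv_distrib]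
    congr 1
    exact Finset.prod_congr rfl fun m _ => Real.rpow_neg (abs_nonneg _) _
  rw [hW]
  rw [div_le_iff₀ hQpos]
  calc |Real.sin (u l)| ≤ 1 := Real.abs_sin_le_one _
    _ = (8⁻¹ * P⁻¹) * (8 * P) := by field_simp
    _ ≤ (8⁻¹ * P⁻¹) * Qf u := by
        apply mul_le_mul_of_nonneg_left hQP
        positivity


lemma jordan_aux {t : ℝ} (h0 : 0 ≤ t) (h1 : t ≤ Real.pi) :
    2 / Real.pi * min t (Real.pi - t) ≤ Real.sin t := by
  rcases le_total t (Real.pi / 2) with h | h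
  · calc 2 / Real.pi * min t (Real.pi - t) ≤ 2 / Real.pi * t := by
          apply mul_le_mul_of_nonneg_left (min_le_left _ _)
          positivity
      _ ≤ Real.sin t := Real.mul_le_sin h0 h
  · have h2 : Real.pi - t ≤ Real.pi / 2 := by linarith
    have h3 : 0 ≤ Real.pi - t := by linarith
    calc 2 / Real.pi * min t (Real.pi - t) ≤ 2 / Real.pi * (Real.pi - t) := by
          apply mul_le_mul_of_nonneg_left (min_le_right _ _)
          positivity
      _ ≤ Real.sin (Real.pi - t) := Real.mul_le_sin h3 h2
      _ = Real.sin t := Real.sin_pi_sub t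

lemma jordan_nonneg {t : ℝ} (h0 : 0 ≤ t) (h1 : t ≤ Real.pi) :
    2 / Real.pi * min (min |t| |t - Real.pi|) |t + Real.pi| ≤ |Real.sin t| := by
  have habs : |t| = t := abs_of_nonneg h0
  have habs2 : |t - Real.pi| = Real.pi - t := by rw [abs_sub_comm]; exact abs_of_nonneg (by linarith)
  have hs : |Real.sin t| = Real.sin t := abs_of_nonneg (Real.sin_nonneg_of_nonneg_of_le_pi h0 h1)
  rw [habs, habs2, hs]
  calc 2 / Real.pi * min (min t (Real.pi - t)) |t + Real.pi|
      ≤ 2 / Real.pi * min t (Real.pi - t) := by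
        apply mul_le_mul_of_nonneg_left (min_le_left _ _)
        positivity
    _ ≤ Real.sin t := jordan_aux h0 h1

lemma jordan {t : ℝ} (h0 : -Real.pi ≤ t) (h1 : t ≤ Real.pi) :
    2 / Real.pi * min (min |t| |t - Real.pi|) |t + Real.pi| ≤ |Real.sin t| := by
  rcases le_total 0 t with h | h
  · exact jordan_nonneg h h1
  · have := jordan_nonneg (t := -t) (by linarith) (by linarith)
    have e1 : |(-t)| = |t| := abs_neg t
    have e2 : |(-t) - Real.pi| = |t + Real.pi| := by rw [← abs_neg]; ring_nf
    have e3 : |(-t) + Real.pi| = |t - Real.pi| := by rw [← abs_neg]; ring_nf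
    have e4 : |Real.sin (-t)| = |Real.sin t| := by rw [Real.sin_neg, abs_neg]
    rw [e1, e2, e3, e4] at this
    calc 2 / Real.pi * min (min |t| |t - Real.pi|) |t + Real.pi|
        = 2 / Real.pi * min (min |t| |t + Real.pi|) |t - Real.pi| := by
          rw [min_assoc, min_comm |t - Real.pi| _, ← min_assoc]
      _ ≤ |Real.sin t| := this

/-- `|t - a| ^ r` is integrable on `[-π, π]` for `-1 < r`. -/
lemma integrableOn_abs_sub_rpow {r : ℝ} (hr : -1 < r) {a : ℝ}
    (ha1 : -Real.pi ≤ a) (ha2 : a ≤ Real.pi) :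
    IntegrableOn (fun t => |t - a| ^ r) (Set.Icc (-Real.pi) Real.pi) := by
  rw [integrableOn_Icc_iff_integrableOn_Ioc]
  have h1 : IntegrableOn (fun t => |t - a| ^ r) (Set.Ioc (-Real.pi) a) := by
    have base : IntervalIntegrable (fun x : ℝ => x ^ r) volume 0 (a + Real.pi) :=
      intervalIntegral.intervalIntegrable_rpow' hr
    have comp := (base.comp_sub_left a).symm
    have e1 : a - 0 = a := by ring
    have e2 : a - (a + Real.pi) = -Real.pi := by ring
    rw [e1, e2] at comp
    rw [intervalIntegrable_iff_integrableOn_Ioc_of_le ha1] at comp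
    refine comp.congr_fun ?_ measurableSet_Ioc
    intro t ht
    show (a - t) ^ r = |t - a| ^ r
    rw [abs_sub_comm, abs_of_nonneg (by linarith [ht.2] : 0 ≤ a - t)]
  have h2 : IntegrableOn (fun t => |t - a| ^ r) (Set.Ioc a Real.pi) := by
    have base : IntervalIntegrable (fun x : ℝ => x ^ r) volume 0 (Real.pi - a) :=
      intervalIntegral.intervalIntegrable_rpow' hr
    have comp := base.comp_sub_right a
    have e1 : 0 + a = a := by ring
    have e2 : Real.pi - a + a = Real.pi := by ring
    rw [e1, e2] at comp
    rw [intervalIntegrable_iff_integrableOn_Ioc_of_le ha2] at comp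
    refine comp.congr_fun ?_ measurableSet_Ioc
    intro t ht
    show (t - a) ^ r = |t - a| ^ r
    rw [abs_of_nonneg (by linarith [ht.1] : 0 ≤ t - a)]
  rw [← Set.Ioc_union_Ioc_eq_Ioc ha1 ha2]
  exact h1.union h2


lemma measurableSet_cube : MeasurableSet cube :=
  MeasurableSet.univ_pi fun _ => measurableSet_Icc

lemma volume_cube_lt_top : volume cube < ⊤ := by
  rw [cube, MeasureTheory.volume_pi_pi]
  simp [Real.volume_Icc]

/-- 1-D integrability of `|sin t| ^ (-1/4)`. -/
lemma integrableOn_g1 :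
    IntegrableOn (fun t => |Real.sin t| ^ (-(4:ℝ)⁻¹)) (Set.Icc (-Real.pi) Real.pi) := by
  set r : ℝ := -(4:ℝ)⁻¹ with hr
  have hrneg : r < 0 := by rw [hr]; norm_num
  have hr1 : (-1:ℝ) < r := by rw [hr]; norm_num
  set G : ℝ → ℝ := fun t =>
    (Real.pi/2) ^ ((4:ℝ)⁻¹) * (|t - 0| ^ r + (|t - Real.pi| ^ r + |t - (-Real.pi)| ^ r)) with hG
  have hGint : IntegrableOn G (Set.Icc (-Real.pi) Real.pi) := by
    apply Integrable.const_mul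
    apply Integrable.add
    · exact integrableOn_abs_sub_rpow hr1 (by linarith [Real.pi_pos]) (le_of_lt Real.pi_pos)
    apply Integrable.add
    · exact integrableOn_abs_sub_rpow hr1 (by linarith [Real.pi_pos]) le_rfl
    · exact integrableOn_abs_sub_rpow hr1 le_rfl (by linarith [Real.pi_pos])
  have hmeas : Measurable fun t => |Real.sin t| ^ r := by
    have he : (fun t => |Real.sin t| ^ r)
        = fun t => if Real.sin t = 0 then 0 else Real.exp (Real.log |Real.sin t| * r) := by
      funext t
      by_cases h : Real.sin t = 0
      · simp [h, Real.zero_rpow (by norm_num : r ≠ 0)]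
      · rw [if_neg h, Real.rpow_def_of_pos (abs_pos.mpr h)]
    rw [he]
    exact Measurable.ite (Real.measurable_sin (measurableSet_singleton 0)) measurable_const
      (Real.measurable_exp.comp ((Real.measurable_log.comp Real.measurable_sin.abs).mul_const r))
  apply Integrable.mono' hGint hmeas.aestronglyMeasurable
  rw [MeasureTheory.ae_restrict_iff' measurableSet_Icc]
  apply Filter.Eventually.of_forall
  intro t ht
  have hbound : |Real.sin t| ^ r ≤ G t := by
    by_cases hs : Real.sin t = 0
    · rw [hs, abs_zero, Real.zero_rpow (by norm_num : r ≠ 0)]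
      rw [hG]
      positivity
    · set d : ℝ := min (min |t| |t - Real.pi|) |t + Real.pi| with hd
      have hdpos : 0 < d := by
        have p1 : 0 < |t| := abs_pos.mpr fun h => hs (by rw [h]; exact Real.sin_zero)
        have p2 : 0 < |t - Real.pi| := abs_pos.mpr (sub_ne_zero.mpr fun h => hs
          (by rw [h]; exact Real.sin_pi))
        have p3 : 0 < |t + Real.pi| := by
          rw [abs_pos]
          intro h
          have ht' : t = -Real.pi := by linarith
          rw [ht'] at hs
          simp at hs
        rw [hd]
        exact lt_min (lt_min p1 p2) p3
      have hj : 2 / Real.pi * d ≤ |Real.sin t| := jordan ht.1 ht.2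
      have h1 : |Real.sin t| ^ r ≤ (2 / Real.pi * d) ^ r := by
        apply Real.rpow_le_rpow_of_nonpos (by positivity) hj (le_of_lt hrneg)
      have h2 : (2 / Real.pi * d) ^ r = (Real.pi/2) ^ ((4:ℝ)⁻¹) * d ^ r := by
        rw [Real.mul_rpow (by positivity) (le_of_lt hdpos)]
        congr 1
        rw [hr, Real.rpow_neg (by positivity), ← Real.inv_rpow (by positivity), inv_div]
      have h3 : d ^ r ≤ |t - 0| ^ r + (|t - Real.pi| ^ r + |t - (-Real.pi)| ^ r) := by
        have n1 : (0:ℝ) ≤ |t - 0| ^ r := Real.rpow_nonneg (abs_nonneg _) _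
        have n2 : (0:ℝ) ≤ |t - Real.pi| ^ r := Real.rpow_nonneg (abs_nonneg _) _
        have n3 : (0:ℝ) ≤ |t - (-Real.pi)| ^ r := Real.rpow_nonneg (abs_nonneg _) _
        have e0 : |t - 0| = |t| := by rw [sub_zero]
        have e3 : |t - (-Real.pi)| = |t + Real.pi| := by rw [sub_neg_eq_add]
        rcases min_choice (min |t| |t - Real.pi|) |t + Real.pi| with h | h
        · rcases min_choice |t| |t - Real.pi| with h' | h'
          · have : d = |t| := by rw [hd, h, h']
            rw [this, ← e0]; linarith
          · have : d = |t - Real.pi| := by rw [hd, h, h']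
            rw [this]; linarith
        · have : d = |t + Real.pi| := by rw [hd, h]
          rw [this, ← e3]; linarith
      calc |Real.sin t| ^ r ≤ (2 / Real.pi * d) ^ r := h1
        _ = (Real.pi/2) ^ ((4:ℝ)⁻¹) * d ^ r := h2
        _ ≤ G t := by
            rw [hG]
            apply mul_le_mul_of_nonneg_left h3 (by positivity)
  calc ‖|Real.sin t| ^ r‖ = |Real.sin t| ^ r := by
        rw [Real.norm_eq_abs, abs_of_nonneg (Real.rpow_nonneg (abs_nonneg _) _)]
    _ ≤ G t := hbound

lemma integrableOn_Wf : IntegrableOn Wf cube := by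
  rw [← MeasureTheory.integrable_indicator_iff measurableSet_cube]
  have hind : cube.indicator Wf = fun u => 8⁻¹ *
      ∏ m : Fin 8, (Set.Icc (-Real.pi) Real.pi).indicator
        (fun t => |Real.sin t| ^ (-(4:ℝ)⁻¹)) (u m) := by
    funext u
    by_cases hu : u ∈ cube
    · rw [Set.indicator_of_mem hu, Wf]
      congr 1
      refine Finset.prod_congr rfl fun m _ => ?_
      rw [Set.indicator_of_mem]
      exact (Set.mem_univ_pi.mp hu) m
    · rw [Set.indicator_of_notMem hu]
      have : ∃ m : Fin 8, u m ∉ Set.Icc (-Real.pi) Real.pi := by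
        by_contra hc
        push_neg at hc
        exact hu (Set.mem_univ_pi.mpr hc)
      obtain ⟨m, hm⟩ := this
      rw [eq_comm, mul_eq_zero]
      right
      apply Finset.prod_eq_zero (Finset.mem_univ m)
      rw [Set.indicator_of_notMem hm]
  rw [hind]
  apply Integrable.const_mul
  apply MeasureTheory.Integrable.fintype_prod (f := fun _ =>
    (Set.Icc (-Real.pi) Real.pi).indicator (fun t => |Real.sin t| ^ (-(4:ℝ)⁻¹)))
  intro _
  exact (MeasureTheory.integrable_indicator_iff measurableSet_Icc).mpr integrableOn_g1

lemma ae_good : ∀ᵐ u : Fin 8 → ℝ, ∀ m, Real.sin (u m) ≠ 0 := by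
  rw [MeasureTheory.ae_iff]
  have hsub : {u : Fin 8 → ℝ | ¬ ∀ m, Real.sin (u m) ≠ 0}
      = ⋃ m : Fin 8, {u : Fin 8 → ℝ | Real.sin (u m) = 0} := by
    ext u; simp [not_forall]
  rw [hsub]
  apply MeasureTheory.measure_iUnion_null
  intro m
  have hS : volume {t : ℝ | Real.sin t = 0} = 0 := by
    apply Set.Countable.measure_zero
    apply Set.Countable.mono _ (Set.countable_range (fun n : ℤ => (n:ℝ) * Real.pi))
    intro t ht
    obtain ⟨n, hn⟩ := Real.sin_eq_zero_iff.mp ht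
    exact ⟨n, hn⟩
  have heq : {u : Fin 8 → ℝ | Real.sin (u m) = 0}
      = Set.pi Set.univ (fun j => if j = m then {t : ℝ | Real.sin t = 0} else Set.univ) := by
    ext u
    simp only [Set.mem_setOf_eq, Set.mem_univ_pi]
    constructor
    · intro h j; by_cases hj : j = m <;> simp [hj, h]
    · intro h; have := h m; simpa using this
  rw [heq, MeasureTheory.volume_pi_pi]
  apply Finset.prod_eq_zero (Finset.mem_univ m)
  simp [hS]

lemma integrableOn_of_bound {f : (Fin 8 → ℝ) → ℂ} (hm : Measurable f)
    (hb : ∀ u, (∀ m, Real.sin (u m) ≠ 0) → ‖f u‖ ≤ Wf u) : IntegrableOn f cube := by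
  apply Integrable.mono' integrableOn_Wf hm.aestronglyMeasurable
  apply MeasureTheory.ae_restrict_of_ae
  filter_upwards [ae_good] with u hu
  exact hb u hu

lemma norm_core (l : Fin 8) (x : Lat8) (u : Fin 8 → ℝ) :
    ‖core l x u‖ = |Real.sin (u l)| / Qf u := by
  rw [core, norm_mul, norm_phase, mul_one, norm_div, norm_mul, Complex.norm_I, one_mul,
    Complex.norm_real, Complex.norm_real, Real.norm_eq_abs, Real.norm_eq_abs,
    abs_of_nonneg (Qf_nonneg u)]

lemma integrableOn_core (l : Fin 8) (x : Lat8) : IntegrableOn (core l x) cube :=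
  integrableOn_of_bound (measurable_core l x)
    (fun u hu => by rw [norm_core]; exact div_Qf_le_Wf hu l)

def jcore (l m : Fin 8) (x : Lat8) (u : Fin 8 → ℝ) : ℂ :=
  (((Real.sin (u l) * Real.sin (u m) / Qf u : ℝ)) : ℂ) * phase x u

lemma measurable_jcore (l m : Fin 8) (x : Lat8) : Measurable (jcore l m x) := by
  apply Measurable.mul ?_ (measurable_phase x)
  apply Complex.measurable_ofReal.comp
  apply Measurable.div ?_ measurable_Qf
  exact (Real.measurable_sin.comp (measurable_pi_apply l)).mul
    (Real.measurable_sin.comp (measurable_pi_apply m))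

lemma norm_jcore_le (l m : Fin 8) (x : Lat8) (u : Fin 8 → ℝ) :
    ‖jcore l m x u‖ ≤ |Real.sin (u l)| / Qf u := by
  rw [jcore, norm_mul, norm_phase, mul_one, Complex.norm_real, Real.norm_eq_abs,
    abs_div, abs_of_nonneg (Qf_nonneg u), abs_mul]
  by_cases hQ : Qf u = 0
  · simp [hQ]
  · have hQpos : 0 < Qf u := (Qf_nonneg u).lt_of_ne (Ne.symm hQ)
    have h1 : |Real.sin (u l)| * |Real.sin (u m)| ≤ |Real.sin (u l)| :=
      mul_le_of_le_one_right (abs_nonneg _) (Real.abs_sin_le_one _)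
    gcongr

lemma integrableOn_jcore (l m : Fin 8) (x : Lat8) : IntegrableOn (jcore l m x) cube :=
  integrableOn_of_bound (measurable_jcore l m x)
    (fun u hu => le_trans (norm_jcore_le l m x u) (div_Qf_le_Wf hu l))

lemma integrableOn_phase (x : Lat8) : IntegrableOn (phase x) cube := by
  have hconst : IntegrableOn (fun _ : Fin 8 → ℝ => (1:ℝ)) cube :=
    MeasureTheory.integrableOn_const volume_cube_lt_top.ne
  apply Integrable.mono' hconst (measurable_phase x).aestronglyMeasurable
  apply Filter.Eventually.of_forall
  intro u
  rw [norm_phase]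


lemma exp_diff (t : ℂ) :
    Complex.exp (Complex.I * t) - Complex.exp (-(Complex.I * t))
      = 2 * Complex.sin t * Complex.I := by
  rw [mul_comm Complex.I t, show -(t * Complex.I) = (-t) * Complex.I by ring,
    Complex.exp_mul_I, Complex.exp_mul_I, Complex.cos_neg, Complex.sin_neg]
  ring

lemma cast_add_apply (x : Lat8) (m j : Fin 8) :
    (((x + unitL m) j : ℤ) : ℝ) = ((x j : ℤ) : ℝ) + (if j = m then 1 else 0) := by
  have : (x + unitL m) j = x j + unitL m j := rfl
  rw [this, unitL]
  push_cast
  split_ifs <;> simp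

lemma cast_sub_apply (x : Lat8) (m j : Fin 8) :
    (((x - unitL m) j : ℤ) : ℝ) = ((x j : ℤ) : ℝ) - (if j = m then 1 else 0) := by
  have : (x - unitL m) j = x j - unitL m j := rfl
  rw [this, unitL]
  push_cast
  split_ifs <;> simp

lemma sum_shift_add (x : Lat8) (m : Fin 8) (u : Fin 8 → ℝ) :
    (∑ j : Fin 8, u j * (((x + unitL m) j : ℤ) : ℝ))
      = (∑ j : Fin 8, u j * ((x j : ℤ) : ℝ)) + u m := by
  simp only [cast_add_apply, mul_add, Finset.sum_add_distrib]
  congr 1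
  simp [mul_ite, Finset.sum_ite_eq']

lemma sum_shift_sub (x : Lat8) (m : Fin 8) (u : Fin 8 → ℝ) :
    (∑ j : Fin 8, u j * (((x - unitL m) j : ℤ) : ℝ))
      = (∑ j : Fin 8, u j * ((x j : ℤ) : ℝ)) - u m := by
  simp only [cast_sub_apply, mul_sub, Finset.sum_sub_distrib]
  congr 1
  simp [mul_ite, Finset.sum_ite_eq']

lemma phase_add (x : Lat8) (m : Fin 8) (u : Fin 8 → ℝ) :
    phase (x + unitL m) u = phase x u * Complex.exp (Complex.I * ((u m : ℝ) : ℂ)) := by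
  rw [phase, phase, ← Complex.exp_add, sum_shift_add]
  congr 1
  push_cast
  ring

lemma phase_sub (x : Lat8) (m : Fin 8) (u : Fin 8 → ℝ) :
    phase (x - unitL m) u = phase x u * Complex.exp (-(Complex.I * ((u m : ℝ) : ℂ))) := by
  rw [phase, phase, ← Complex.exp_add, sum_shift_sub]
  congr 1
  push_cast
  ring

lemma core_diff (l m : Fin 8) (x : Lat8) (u : Fin 8 → ℝ) :
    core l (x + unitL m) u - core l (x - unitL m) u = -2 * jcore l m x u := by
  rw [core, core, phase_add, phase_sub, jcore]
  have h : (Complex.I * ((Real.sin (u l) : ℝ) : ℂ) / ((Qf u : ℝ) : ℂ)) *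
        (phase x u * Complex.exp (Complex.I * ((u m : ℝ) : ℂ)))
      - (Complex.I * ((Real.sin (u l) : ℝ) : ℂ) / ((Qf u : ℝ) : ℂ)) *
        (phase x u * Complex.exp (-(Complex.I * ((u m : ℝ) : ℂ))))
      = (Complex.I * ((Real.sin (u l) : ℝ) : ℂ) / ((Qf u : ℝ) : ℂ)) * phase x u *
          (Complex.exp (Complex.I * ((u m : ℝ) : ℂ))
            - Complex.exp (-(Complex.I * ((u m : ℝ) : ℂ)))) := by ring
  rw [h, exp_diff, ← Complex.ofReal_sin]
  push_cast
  ring_nf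
  rw [Complex.I_sq]
  ring

def Jint (l m : Fin 8) (x : Lat8) : ℂ := ∫ u in cube, jcore l m x u

lemma diff_eq (l m : Fin 8) (x : Lat8) :
    E1coeff l (x + unitL m) - E1coeff l (x - unitL m)
      = ((((2*Real.pi)^8 : ℝ) : ℂ))⁻¹ * (2 * Jint l m x) := by
  rw [E1coeff_eq, E1coeff_eq]
  have h1 : (∫ u in cube, core l (x + unitL m) u) - (∫ u in cube, core l (x - unitL m) u)
      = ∫ u in cube, (core l (x + unitL m) u - core l (x - unitL m) u) :=
    (MeasureTheory.integral_sub (integrableOn_core _ _) (integrableOn_core _ _)).symm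
  have h2 : (∫ u in cube, (core l (x + unitL m) u - core l (x - unitL m) u))
      = -2 * Jint l m x := by
    rw [show (fun u => core l (x + unitL m) u - core l (x - unitL m) u)
        = fun u => (-2 : ℂ) * jcore l m x u from funext (core_diff l m x), Jint]
    exact MeasureTheory.integral_const_mul _ _
  have h3 := h1.trans h2
  linear_combination (-(((((2*Real.pi)^8 : ℝ) : ℂ)))⁻¹) * h3

lemma Qf_pos_of_good {u : Fin 8 → ℝ} (hu : ∀ m, Real.sin (u m) ≠ 0) : 0 < Qf u := by
  apply Finset.sum_pos' (fun m _ => sq_nonneg _)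
  refine ⟨0, Finset.mem_univ 0, ?_⟩
  have h0 := hu 0
  positivity

lemma sum_jcore {u : Fin 8 → ℝ} (hu : ∀ m, Real.sin (u m) ≠ 0) (k : Fin 8) (x : Lat8) :
    ∑ m : Fin 8, ∑ l : Fin 8, ((structC m l k * ebarSign l : ℝ) : ℂ) * jcore l m x u
      = if k = 0 then phase x u else 0 := by
  have hQ : Qf u ≠ 0 := ne_of_gt (Qf_pos_of_good hu)
  have hterm : ∀ m l : Fin 8, ((structC m l k * ebarSign l : ℝ) : ℂ) * jcore l m x u
      = ((((structC m l k * ebarSign l) * (Real.sin (u l) * Real.sin (u m)) / Qf u : ℝ)) : ℂ)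
          * phase x u := by
    intro m l
    rw [jcore]
    push_cast
    ring
  simp only [hterm, ← Finset.sum_mul]
  have hreal : ∑ m : Fin 8, ∑ l : Fin 8,
      (structC m l k * ebarSign l) * (Real.sin (u l) * Real.sin (u m)) / Qf u
      = if k = 0 then 1 else 0 := by
    simp only [← Finset.sum_div]
    rw [struct_sum_identity k (fun m => Real.sin (u m))]
    by_cases hk : k = 0
    · simp only [hk, if_pos rfl]
      exact div_self (by rw [← Qf]; exact hQ)
    · simp [hk]
  simp only [← Complex.ofReal_sum]
  rw [hreal]
  by_cases hk : k = 0 <;> simp [hk]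

lemma sum_Jint (k : Fin 8) (x : Lat8) :
    ∑ m : Fin 8, ∑ l : Fin 8, ((structC m l k * ebarSign l : ℝ) : ℂ) * Jint l m x
      = if k = 0 then ∫ u in cube, phase x u else 0 := by
  have h1 : ∑ m : Fin 8, ∑ l : Fin 8, ((structC m l k * ebarSign l : ℝ) : ℂ) * Jint l m x
      = ∫ u in cube, ∑ m : Fin 8, ∑ l : Fin 8,
          ((structC m l k * ebarSign l : ℝ) : ℂ) * jcore l m x u := by
    rw [MeasureTheory.integral_finset_sum _ (fun m _ =>
      MeasureTheory.integrable_finset_sum _ (fun l _ =>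
        ((integrableOn_jcore l m x).const_mul _)))]
    refine Finset.sum_congr rfl fun m _ => ?_
    rw [MeasureTheory.integral_finset_sum _ (fun l _ => (integrableOn_jcore l m x).const_mul _)]
    refine Finset.sum_congr rfl fun l _ => ?_
    rw [Jint, MeasureTheory.integral_const_mul]
  rw [h1]
  have h2 : (∫ u in cube, ∑ m : Fin 8, ∑ l : Fin 8,
      ((structC m l k * ebarSign l : ℝ) : ℂ) * jcore l m x u)
      = ∫ u in cube, (if k = 0 then phase x u else 0) := by
    apply MeasureTheory.integral_congr_ae
    apply MeasureTheory.ae_restrict_of_ae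
    filter_upwards [ae_good] with u hu
    exact sum_jcore hu k x
  rw [h2]
  by_cases hk : k = 0 <;> simp [hk]


lemma mem_cube_iff (u : Fin 8 → ℝ) :
    u ∈ cube ↔ ∀ m, u m ∈ Set.Icc (-Real.pi) Real.pi := by
  rw [cube]; exact Set.mem_univ_pi

lemma indicator_cube_prod (F : Fin 8 → ℝ → ℂ) :
    cube.indicator (fun u => ∏ m : Fin 8, F m (u m))
      = fun u => ∏ m : Fin 8, (Set.Icc (-Real.pi) Real.pi).indicator (F m) (u m) := by
  funext u
  by_cases hu : u ∈ cube
  · rw [Set.indicator_of_mem hu]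
    exact Finset.prod_congr rfl fun m _ =>
      (Set.indicator_of_mem ((mem_cube_iff u).mp hu m) _).symm
  · rw [Set.indicator_of_notMem hu]
    have : ∃ m : Fin 8, u m ∉ Set.Icc (-Real.pi) Real.pi := by
      by_contra hc
      push_neg at hc
      exact hu ((mem_cube_iff u).mpr hc)
    obtain ⟨m, hm⟩ := this
    rw [eq_comm]
    apply Finset.prod_eq_zero (Finset.mem_univ m)
    rw [Set.indicator_of_notMem hm]

lemma oneD (n : ℤ) :
    (∫ t : ℝ, (Set.Icc (-Real.pi) Real.pi).indicator
        (fun t => Complex.exp (Complex.I * (t : ℂ) * ((n : ℝ) : ℂ))) t)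
      = if n = 0 then (((2*Real.pi : ℝ)) : ℂ) else 0 := by
  rw [MeasureTheory.integral_indicator measurableSet_Icc]
  by_cases hn : n = 0
  · subst hn
    simp only [Int.cast_zero, Complex.ofReal_zero, mul_zero, Complex.exp_zero, if_pos rfl]
    rw [MeasureTheory.setIntegral_const]
    rw [measureReal_def, Real.volume_Icc]
    rw [ENNReal.toReal_ofReal (by linarith [Real.pi_pos])]
    push_cast
    rw [Complex.real_smul]
    push_cast
    ring
  · rw [if_neg hn]
    rw [MeasureTheory.integral_Icc_eq_integral_Ioc,
      ← intervalIntegral.integral_of_le (by linarith [Real.pi_pos] : -Real.pi ≤ Real.pi)]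
    have hcongr : ∀ t : ℝ, Complex.exp (Complex.I * (t : ℂ) * ((n : ℝ) : ℂ))
        = Complex.exp ((Complex.I * (n : ℂ)) * (t : ℂ)) := by
      intro t; push_cast; ring_nf
    rw [intervalIntegral.integral_congr (fun t _ => hcongr t)]
    rw [integral_exp_mul_complex (mul_ne_zero Complex.I_ne_zero
      (by exact_mod_cast hn : ((n : ℤ) : ℂ) ≠ 0))]
    have hexp : Complex.exp (Complex.I * (n : ℂ) * ((Real.pi : ℝ) : ℂ))
        = Complex.exp (Complex.I * (n : ℂ) * (((-Real.pi : ℝ)) : ℂ)) := by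
      have harg : Complex.I * (n : ℂ) * ((Real.pi : ℝ) : ℂ)
          = Complex.I * (n : ℂ) * (((-Real.pi : ℝ)) : ℂ) + (n : ℂ) * (2 * (Real.pi : ℂ) * Complex.I) := by
        push_cast
        ring
      rw [harg, Complex.exp_add, Complex.exp_int_mul_two_pi_mul_I, mul_one]
    rw [hexp, sub_self, zero_div]

lemma integral_phase (x : Lat8) :
    (∫ u in cube, phase x u) = if x = 0 then ((((2*Real.pi)^8 : ℝ)) : ℂ) else 0 := by
  have hphase : (fun u : Fin 8 → ℝ => phase x u)
      = fun u => ∏ m : Fin 8, Complex.exp (Complex.I * ((u m : ℝ) : ℂ) * (((x m : ℤ) : ℝ) : ℂ)) := by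
    funext u
    rw [phase, ← Complex.exp_sum]
    congr 1
    push_cast
    rw [Finset.mul_sum]
    refine Finset.sum_congr rfl fun m _ => ?_
    ring
  rw [hphase, ← MeasureTheory.integral_indicator measurableSet_cube,
    indicator_cube_prod (fun m t => Complex.exp (Complex.I * (t : ℂ) * (((x m : ℤ) : ℝ) : ℂ)))]
  rw [MeasureTheory.volume_pi, MeasureTheory.integral_fintype_prod_eq_prod (ι := Fin 8)
    (f := fun m => (Set.Icc (-Real.pi) Real.pi).indicator
      (fun t => Complex.exp (Complex.I * (t : ℂ) * (((x m : ℤ) : ℝ) : ℂ))))]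
  rw [Finset.prod_congr rfl fun m (_ : m ∈ Finset.univ) => oneD (x m)]
  by_cases hx : x = 0
  · subst hx
    simp only [Pi.zero_apply, if_pos rfl, Finset.prod_const, Finset.card_univ, Fintype.card_fin]
    push_cast
    ring
  · have : ∃ m : Fin 8, x m ≠ 0 := by
      by_contra hc
      push_neg at hc
      exact hx (funext hc)
    obtain ⟨m, hm⟩ := this
    rw [if_neg hx]
    exact Finset.prod_eq_zero (Finset.mem_univ m) (by rw [if_neg hm])


lemma oct_sum_apply (f : Fin 8 → Oct) (k : Fin 8) :
    (∑ m : Fin 8, f m) k = ∑ m : Fin 8, f m k :=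
  by rw [WithLp.ofLp_sum, Finset.sum_apply]

lemma oct_smul_apply (c : ℝ) (v : Oct) (k : Fin 8) : (c • v) k = c * v k := rfl

lemma oct_sub_apply (v w : Oct) (k : Fin 8) : (v - w) k = v k - w k := rfl

lemma octMul_apply (a b : Oct) (k : Fin 8) :
    octMul a b k = ∑ i : Fin 8, ∑ j : Fin 8, a i * b j * structC i j k := by
  unfold octMul; rfl

lemma octBasis_apply (m i : Fin 8) : octBasis m i = if i = m then 1 else 0 :=
  EuclideanSpace.single_apply m 1 i

lemma E1_apply (y : Lat8) (j : Fin 8) : E1 y j = ebarSign j * (E1coeff j y).re := by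
  unfold E1; rfl

lemma octMul_basis_apply (m : Fin 8) (v : Oct) (k : Fin 8) :
    octMul (octBasis m) v k = ∑ j : Fin 8, v j * structC m j k := by
  rw [octMul_apply]
  rw [Finset.sum_eq_single m]
  · refine Finset.sum_congr rfl fun j _ => ?_
    rw [octBasis_apply, if_pos rfl, one_mul]
  · intro i _ him
    apply Finset.sum_eq_zero
    intro j _
    rw [octBasis_apply, if_neg him, zero_mul, zero_mul]
  · intro h; exact absurd (Finset.mem_univ m) h


lemma Cne : (((2*Real.pi)^8 : ℝ)) ≠ 0 := by positivity

lemma main1 (x : Lat8) :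
    ∑ m : Fin 8, octMul (octBasis m) ((2:ℝ)⁻¹ • (E1 (x + unitL m) - E1 (x - unitL m)))
      = (if x = 0 then (1:ℝ) else 0) • octBasis 0 := by
  ext k
  rw [oct_sum_apply]
  set C : ℂ := (((2*Real.pi)^8 : ℝ) : ℂ) with hC
  have hterm : ∀ m : Fin 8,
      octMul (octBasis m) ((2:ℝ)⁻¹ • (E1 (x + unitL m) - E1 (x - unitL m))) k
        = ∑ j : Fin 8, (((structC m j k * ebarSign j : ℝ) : ℂ) * (C⁻¹ * Jint j m x)).re := by
    intro m
    rw [octMul_basis_apply]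
    refine Finset.sum_congr rfl fun j _ => ?_
    rw [oct_smul_apply, oct_sub_apply, E1_apply, E1_apply]
    have hJ : C⁻¹ * Jint j m x
        = (((2:ℝ)⁻¹ : ℝ) : ℂ) * (E1coeff j (x + unitL m) - E1coeff j (x - unitL m)) := by
      rw [diff_eq j m x, ← hC]
      push_cast
      ring
    have hd : (C⁻¹ * Jint j m x).re
        = 2⁻¹ * ((E1coeff j (x + unitL m)).re - (E1coeff j (x - unitL m)).re) := by
      rw [hJ, Complex.re_ofReal_mul, Complex.sub_re]
    rw [Complex.re_ofReal_mul, hd]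
    ring
  rw [Finset.sum_congr rfl (fun m _ => hterm m)]
  simp only [← Complex.re_sum]
  have hpull : ∀ m j : Fin 8, ((structC m j k * ebarSign j : ℝ) : ℂ) * (C⁻¹ * Jint j m x)
      = C⁻¹ * (((structC m j k * ebarSign j : ℝ) : ℂ) * Jint j m x) := by
    intro m j; ring
  simp only [hpull, ← Finset.mul_sum]
  rw [sum_Jint k x, integral_phase x]
  rw [oct_smul_apply, octBasis_apply]
  by_cases hk : k = 0
  · by_cases hx : x = 0
    · rw [if_pos hk, if_pos hx, if_pos hx, if_pos hk]
      rw [inv_mul_cancel₀ (by rw [hC]; exact_mod_cast Complex.ofReal_ne_zero.mpr Cne)]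
      simp
    · rw [if_pos hk, if_neg hx, if_neg hx, if_pos hk]
      simp
  · by_cases hx : x = 0 <;> simp [hk, hx]

lemma octMul_smul_right (c : ℝ) (a b : Oct) : octMul a (c • b) = c • octMul a b := by
  ext k
  rw [octMul_apply, oct_smul_apply, octMul_apply, Finset.mul_sum]
  refine Finset.sum_congr rfl fun i _ => ?_
  rw [Finset.mul_sum]
  refine Finset.sum_congr rfl fun j _ => ?_
  rw [oct_smul_apply]
  ring

end EhFS

/-- `E^h` is a fundamental solution of the discrete Dirac operator. -/
theorem Eh_fundamental_solution (h : ℝ) (hh : 0 < h) (x : Lat8) :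
    DiracD h (Eh h) x = deltah h x • octBasis 0 := by
  have hdiff : ∀ m : Fin 8, cdiff h (Eh h) m x
      = (h⁻¹ * (h^7)⁻¹) • ((2:ℝ)⁻¹ • (E1 (x + unitL m) - E1 (x - unitL m))) := by
    intro m
    rw [cdiff, fdiff, bdiff]
    simp only [Eh]
    module
  rw [DiracD]
  rw [Finset.sum_congr rfl (fun m (_ : m ∈ Finset.univ) => by rw [hdiff m, EhFS.octMul_smul_right])]
  rw [← Finset.smul_sum, EhFS.main1, smul_smul]
  congr 1
  rw [deltah]
  by_cases hx : x = 0
  · rw [if_pos hx, if_pos hx, mul_one, ← mul_inv, ← pow_succ']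
  · rw [if_neg hx, if_neg hx, mul_zero]

end
end

section
/- Let B ⊂ ℝ^8 be a bounded open set and for each h > 0 let B^h ⊆ ℤ^8_h, such that B^h converges to B as h → 0. Then for every compact set K with K ⊆ B there exists δ > 0 such that K ∩ ℤ^8_h ⊆ B^h for every 0 < h < δ. -/
open MeasureTheory Real Filter Topology
open scoped BigOperators

noncomputable section

lemma aux_path (S : Set Lat8) : ∀ n : ℕ, ∀ b x : Lat8,
    (∑ i, (x i - b i).natAbs) = n → b ∈ S → x ∉ S →
    ∃ p ∈ dBdryS S, ∀ i, |p i - b i| ≤ |x i - b i| := by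
  intro n
  induction n with
  | zero =>
    intro b x hsum hb hx
    have hxb : x = b := by
      funext i
      have := Finset.sum_eq_zero_iff.mp hsum i (Finset.mem_univ i)
      omega
    exact absurd (hxb ▸ hb) hx
  | succ n ih =>
    intro b x hsum hb hx
    have hne : ∃ l, x l ≠ b l := by
      by_contra hc
      push_neg at hc
      have : x = b := funext fun i => hc i
      exact hx (this ▸ hb)
    obtain ⟨l, hl⟩ := hne
    set b' : Lat8 := if 0 < x l - b l then b + unitL l else b - unitL l with hb'
    have hb'l : b' l = if 0 < x l - b l then b l + 1 else b l - 1 := by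
      by_cases hc : 0 < x l - b l <;> simp only [hb', hc, ↓reduceIte] <;> simp [unitL]
    have hb'i : ∀ i, i ≠ l → b' i = b i := by
      intro i hi
      by_cases hc : 0 < x l - b l <;> simp only [hb', hc, ↓reduceIte] <;> simp [unitL, hi]
    have hdec : (x l - b' l).natAbs + 1 = (x l - b l).natAbs := by
      rw [hb'l]
      by_cases hc : 0 < x l - b l <;> simp [hc] <;> omega
    by_cases hb'S : b' ∈ S
    · have hsum' : (∑ i, (x i - b' i).natAbs) = n := by
        have e1 : (∑ i, (x i - b i).natAbs)
            = (x l - b l).natAbs + ∑ i ∈ Finset.univ.erase l, (x i - b i).natAbs :=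
          (Finset.add_sum_erase _ _ (Finset.mem_univ l)).symm
        have e2 : (∑ i, (x i - b' i).natAbs)
            = (x l - b' l).natAbs + ∑ i ∈ Finset.univ.erase l, (x i - b' i).natAbs :=
          (Finset.add_sum_erase _ _ (Finset.mem_univ l)).symm
        have e3 : ∑ i ∈ Finset.univ.erase l, (x i - b' i).natAbs
            = ∑ i ∈ Finset.univ.erase l, (x i - b i).natAbs := by
          refine Finset.sum_congr rfl fun i hi => ?_
          rw [hb'i i (Finset.ne_of_mem_erase hi)]
        omega
      obtain ⟨p, hp, hbox⟩ := ih b' x hsum' hb'S hx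
      refine ⟨p, hp, fun i => ?_⟩
      by_cases hi : i = l
      · subst hi
        have h1 := hbox i
        have h2 : |b' i - b i| ≤ 1 := by rw [hb'l]; split <;> simp
        have h4 : |x i - b' i| + 1 = |x i - b i| := by
          rw [Int.abs_eq_natAbs, Int.abs_eq_natAbs]
          exact_mod_cast hdec
        calc |p i - b i| ≤ |p i - b' i| + |b' i - b i| := abs_sub_le _ _ _
          _ ≤ |x i - b i| := by omega
      · rw [← hb'i i hi]; exact hbox i
    · refine ⟨b, ⟨⟨b, Or.inl rfl, hb⟩, ⟨b', ?_, hb'S⟩⟩, fun i => by simp⟩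
      right
      refine Set.mem_iUnion.mpr ⟨l, ?_⟩
      by_cases hc : 0 < x l - b l <;> simp only [hb', hc, ↓reduceIte] <;> simp

lemma aux_norm_le (u v : Oct) (huv : ∀ i, |u i| ≤ |v i|) : ‖u‖ ≤ ‖v‖ := by
  rw [EuclideanSpace.norm_eq, EuclideanSpace.norm_eq]
  apply Real.sqrt_le_sqrt
  refine Finset.sum_le_sum fun i _ => ?_
  have := huv i
  simp only [Real.norm_eq_abs]
  nlinarith [abs_nonneg (u i)]

lemma aux_dist_toOct (h : ℝ) (p b x : Lat8) (hbox : ∀ i, |p i - b i| ≤ |x i - b i|) :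
    dist (toOct h p) (toOct h b) ≤ dist (toOct h x) (toOct h b) := by
  rw [dist_eq_norm, dist_eq_norm]
  apply aux_norm_le
  intro i
  have h1 : (toOct h p - toOct h b) i = h * ((p i : ℝ) - (b i : ℝ)) := by
    simp [toOct, mul_sub]
  have h2 : (toOct h x - toOct h b) i = h * ((x i : ℝ) - (b i : ℝ)) := by
    simp [toOct, mul_sub]
  rw [h1, h2, abs_mul, abs_mul]
  have h3 : |(p i : ℝ) - (b i : ℝ)| ≤ |(x i : ℝ) - (b i : ℝ)| := by
    exact_mod_cast hbox i
  exact mul_le_mul_of_nonneg_left h3 (abs_nonneg h)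

/-- compact subsets of `B` are eventually captured by `B^h`. -/
theorem compact_subset_eventually_in (B : Set Oct) (hopen : IsOpen B)
    (hbdd : Bornology.IsBounded B) (Bh : ℝ → Set Lat8) (hconv : ConvergesTo Bh B)
    (K : Set Oct) (hK : IsCompact K) (hKB : K ⊆ B) :
    ∃ δ > (0:ℝ), ∀ h : ℝ, 0 < h → h < δ → ∀ x : Lat8, toOct h x ∈ K → x ∈ Bh h := by
  obtain ⟨r, hr, hrK⟩ := hK.exists_thickening_subset_open hopen hKB
  obtain ⟨δ, hδ, hδh⟩ := hconv (r/4) (by positivity)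
  refine ⟨δ, hδ, fun h hh0 hhδ x hxK => ?_⟩
  obtain ⟨-, hc2, hc3, -⟩ := hδh h hh0 hhδ
  obtain ⟨b, hbB, hdb⟩ := hc3 (toOct h x) (subset_closure (hKB hxK))
  by_contra hxN
  obtain ⟨p, hpbd, hpbox⟩ := aux_path (Bh h) _ b x rfl hbB hxN
  obtain ⟨a, haF, hpa⟩ := hc2 p hpbd
  have h1 : dist (toOct h p) (toOct h b) ≤ r/4 :=
    (aux_dist_toOct h p b x hpbox).trans hdb
  have h2 : dist (toOct h x) a < r := by
    calc dist (toOct h x) a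
        ≤ dist (toOct h x) (toOct h b) + dist (toOct h b) (toOct h p)
            + dist (toOct h p) a := dist_triangle4 _ _ _ _
      _ ≤ r/4 + r/4 + r/4 := by
          rw [dist_comm (toOct h b)]
          gcongr
      _ < r := by linarith
  have haB : a ∈ B := hrK (Metric.mem_thickening_iff.mpr ⟨toOct h x, hxK, by
    rwa [dist_comm]⟩)
  rw [hopen.frontier_eq] at haF
  exact haF.2 haB

end
end
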